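/- arXiv:1910.01435 — 2 statements merged into one kernel-verified Lean document; each statement's English description precedes it below -/
import Mathlib

section
/- Let B be a Banach space, Φ the corresponding projective space, and f : Φ → ℝ continuous. Then the k-th eigenvalue hs_k := inf over closed A ⊂ Φ with cat_Φ(A) ≥ k of sup_{x∈A} f(x) satisfies hs_k = inf { t ∈ ℝ : cat_Φ(Φ_{≤t}) ≥ k }, where Φ_{≤t} = { x ∈ Φ : f(x) ≤ t }. -/
open Set Metric Topology unitInterval

noncomputable section
open Classical

variable {B : Type*} [NormedAddCommGroup B] [NormedSpace ℝ B]

/-- There exists a continuous, odd, nonvanishing map `A → ℝ^m \ {0}`. -/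
def HasOddMap (A : Set B) (m : ℕ) : Prop :=
  ∃ h : A → (Fin m → ℝ), Continuous h ∧ (∀ x, h x ≠ 0) ∧
    ∀ (x : A) (hx : -(x : B) ∈ A), h ⟨-(x : B), hx⟩ = -h x

/-- Krasnoselskii genus. -/
def genus (A : Set B) : ℕ∞ :=
  if A = ∅ then 0 else sInf {m : ℕ∞ | ∃ k : ℕ, m = k ∧ HasOddMap A k}

/-- A set is contractible within the ambient space `Φ`. -/
def ContractibleIn {Φ : Type*} [TopologicalSpace Φ] (C : Set Φ) : Prop :=
  ∃ x₀ : Φ, ∃ H : C(↥C × ↥I, Φ),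
    (∀ x : C, H (x, 0) = (x : Φ)) ∧ (∀ x : C, H (x, 1) = x₀)

/-- Lusternik–Schnirelmann subspace category (with closed covers). -/
def catLS {Φ : Type*} [TopologicalSpace Φ] (A : Set Φ) : ℕ∞ :=
  sInf {m : ℕ∞ | ∃ k : ℕ, m = k ∧ ∃ C : Fin k → Set Φ,
    (∀ i, IsClosed (C i)) ∧ (∀ i, ContractibleIn (C i)) ∧ A ⊆ ⋃ i, C i}

/-- `X` can be brought to `Y` via a homotopy in `Φ` starting from the inclusion. -/
def BringsTo {Φ : Type*} [TopologicalSpace Φ] (X Y : Set Φ) : Prop :=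
  ∃ H : C(↥X × ↥I, Φ),
    (∀ x : X, H (x, 0) = (x : Φ)) ∧ (∀ x : X, H (x, 1) ∈ Y)

/-- `a` lies in the homotopy significant spectrum of `f`. -/
def HomotopySignificant {Φ : Type*} [TopologicalSpace Φ] (f : Φ → ℝ) (a : ℝ) : Prop :=
  ¬ BringsTo {x | f x ≤ a} {x | f x < a}

/-- `e` is a weak homotopy significant eigenvalue of `f`. -/
def WeakHomotopySignificant {Φ : Type*} [TopologicalSpace Φ] (f : Φ → ℝ) (e : ℝ) : Prop :=
  ∀ t₁ > e, ∀ t₂ < e, ¬ BringsTo {x | f x ≤ t₁} {x | f x ≤ t₂}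

/-- The k-th Krasnoselskii eigenvalue of (the restriction to the unit sphere of) `f`. -/
def kr (f : B → ℝ) (k : ℕ) : EReal :=
  ⨅ A ∈ {A : Set B | A ⊆ sphere (0 : B) 1 ∧ IsClosed A ∧ A = -A ∧ (k : ℕ∞) ≤ genus A},
    ⨆ x ∈ A, (f x : EReal)

/-- The k-th category (min-max) eigenvalue of `f`. -/
def hs {Φ : Type*} [TopologicalSpace Φ] (f : Φ → ℝ) (k : ℕ) : EReal :=
  ⨅ A ∈ {A : Set Φ | IsClosed A ∧ (k : ℕ∞) ≤ catLS A}, ⨆ x ∈ A, (f x : EReal)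

/-- The antipodal setoid on the unit sphere of `B`. -/
def projSetoid (B : Type*) [NormedAddCommGroup B] [NormedSpace ℝ B] :
    Setoid ↥(sphere (0 : B) 1) where
  r x y := (x : B) = y ∨ (x : B) = -(y : B)
  iseqv := by
    constructor
    · intro x; exact Or.inl rfl
    · rintro x y (h | h)
      · exact Or.inl h.symm
      · exact Or.inr (by rw [h, neg_neg])
    · rintro x y z (h | h) (h' | h')
      · exact Or.inl (h.trans h')
      · exact Or.inr (by rw [h, h'])
      · exact Or.inr (by rw [h, h'])
      · exact Or.inl (by rw [h, h', neg_neg])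

/-- The projective space of `B`, as the quotient of the unit sphere by the antipodal map. -/
def Proj (B : Type*) [NormedAddCommGroup B] [NormedSpace ℝ B] := Quotient (projSetoid B)

instance : TopologicalSpace (Proj B) := instTopologicalSpaceQuotient


lemma catLS_mono {Φ : Type*} [TopologicalSpace Φ] {A A' : Set Φ} (h : A ⊆ A') :
    catLS A ≤ catLS A' := by
  apply sInf_le_sInf
  rintro m ⟨k, rfl, C, h1, h2, h3⟩
  exact ⟨k, rfl, C, h1, h2, h.trans h3⟩

lemma catLS_empty {Φ : Type*} [TopologicalSpace Φ] : catLS (∅ : Set Φ) = 0 := by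
  refine le_antisymm ?_ (by simp)
  apply sInf_le
  exact ⟨0, by simp, fun i => i.elim0, fun i => i.elim0, fun i => i.elim0, by simp⟩

/-- For a continuous function on the projective space of a Banach space, the k-th
category eigenvalue equals the infimum of levels `t` at which the category of the
sublevel set is at least `k`. -/
theorem hs_eq_sInf_catLS_sublevel [CompleteSpace B]
    (f : Proj B → ℝ) (hf : Continuous f) (k : ℕ) :
    hs f k =
      sInf ((fun t : ℝ => (t : EReal)) ''
        {t : ℝ | (k : ℕ∞) ≤ catLS {x : Proj B | f x ≤ t}}) := by
  apply le_antisymm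
  · apply le_sInf
    rintro b ⟨t, ht, rfl⟩
    refine iInf₂_le_of_le {x | f x ≤ t} ⟨isClosed_le hf continuous_const, ht⟩ ?_
    exact iSup₂_le fun x hx => EReal.coe_le_coe_iff.2 hx
  · refine le_iInf₂ fun A hA => ?_
    obtain ⟨hAc, hAk⟩ := hA
    set S := ⨆ x ∈ A, (f x : EReal) with hSdef
    by_cases hS : S = ⊤
    · rw [hS]; exact le_top
    by_cases hb : S = ⊥
    · -- A is empty, hence k = 0 and the RHS infimum is ⊥
      have hAe : A = ∅ := by
        by_contra hne
        obtain ⟨a, ha⟩ := Set.nonempty_iff_ne_empty.2 hne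
        have : (f a : EReal) ≤ S := le_iSup₂ (f := fun x _ => (f x : EReal)) a ha
        rw [hb] at this
        exact (EReal.coe_ne_bot _) (le_bot_iff.1 this)
      have hk0 : (k : ℕ∞) = 0 := by
        rw [hAe, catLS_empty] at hAk
        exact le_bot_iff.1 hAk
      rw [hb]
      refine le_of_eq (sInf_eq_bot.2 ?_)
      intro c hc
      induction c using EReal.rec with
      | bot => exact absurd hc (lt_irrefl _)
      | coe r =>
        exact ⟨((r - 1 : ℝ) : EReal), ⟨r - 1, by simp [hk0], rfl⟩,
          by exact_mod_cast sub_one_lt r⟩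
      | top =>
        exact ⟨((0 : ℝ) : EReal), ⟨0, by simp [hk0], rfl⟩, by simp⟩
    · obtain ⟨r, hr⟩ : ∃ r : ℝ, S = (r : EReal) := ⟨S.toReal, (EReal.coe_toReal hS hb).symm⟩
      have hsub : A ⊆ {x : Proj B | f x ≤ r} := by
        intro x hx
        have : (f x : EReal) ≤ S := le_iSup₂ (f := fun x _ => (f x : EReal)) x hx
        rw [hr] at this
        exact EReal.coe_le_coe_iff.1 this
      have : (r : EReal) ∈ ((fun t : ℝ => (t : EReal)) ''
          {t : ℝ | (k : ℕ∞) ≤ catLS {x : Proj B | f x ≤ t}}) :=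
        ⟨r, hAk.trans (catLS_mono hsub), rfl⟩
      calc sInf _ ≤ (r : EReal) := sInf_le this
        _ = S := hr.symm

end
end

section
/- Let f : ℝP^n → ℝ be continuous. Then for all k ∈ {1,…,n+1}, the k-th Krasnoselskii eigenvalue of the induced even function on S^n equals the k-th category eigenvalue hs_k of f on ℝP^n. -/
open Set Metric Topology unitInterval

noncomputable section
open Classical

variable {B : Type*} [NormedAddCommGroup B] [NormedSpace ℝ B]

/-!
The antipodal quotient `S → ℙ(B)` of the unit sphere is a two-sheeted covering. By homotopy
lifting, a set contractible in `ℙ(B)` has a continuous section; if the set is closed, the image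
`P` of the section is closed and `P ∩ -P = ∅`. Conversely, a closed `P ⊆ S` with `P ∩ -P = ∅`
projects homeomorphically onto a set that contracts in `ℙ(B)` (push `P` along great arcs to one
of its points). Both the genus and the category of a closed symmetric `A ⊆ S` thus count the
pieces of a cover of `A` by such sets `P ∪ -P`: from the pieces one gets the odd map
`x ↦ (d(x, -Pᵢ) - d(x, Pᵢ))ᵢ`, and an odd `h` gives the pieces `{hᵢ ≥ ‖h‖}`. Hence
`genus A = cat (A / ±)`, and `A ↦ A / ±` is a bijection from closed symmetric subsets of `S` onto
closed subsets of `ℙ(B)` that preserves `sup f`.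
-/

section ContractibleIn

variable {X Y : Type*} [TopologicalSpace X] [TopologicalSpace Y]

theorem ContractibleIn.image {S : Set X} (hS : ContractibleIn S) {e : X → Y} (he : Continuous e)
    (hSe : IsEmbedding fun x : S => e x) : ContractibleIn (e '' S) := by
  obtain ⟨x₀, H, H0, H1⟩ := hS
  let ψ (q : e '' S) : S := hSe.toHomeomorph.symm ⟨q, by rw [← image_eq_range]; exact q.2⟩
  have hψ (q : e '' S) : e (ψ q) = q :=
    congrArg Subtype.val (hSe.toHomeomorph.apply_symm_apply _)
  have hψc : Continuous ψ := hSe.toHomeomorph.symm.continuous.comp (by fun_prop)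
  refine ⟨e x₀, ⟨fun qt => e (H (ψ qt.1, qt.2)), by fun_prop⟩, fun q => ?_, fun q => ?_⟩
  · simp [H0, hψ]
  · simp [H1]

theorem IsCoveringMap.exists_section_of_contractibleIn {p : X → Y} (hp : IsCoveringMap p)
    (hsurj : Function.Surjective p) {C : Set Y} (hC : ContractibleIn C) :
    ∃ ℓ : C → X, Continuous ℓ ∧ ∀ q, p (ℓ q) = q := by
  obtain ⟨y₀, H, H0, H1⟩ := hC
  obtain ⟨x₀, rfl⟩ := hsurj y₀
  let K : C(I × C, Y) := ⟨fun tq => H (tq.2, σ tq.1), by fun_prop⟩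
  let L := hp.liftHomotopy K (.const C x₀) fun q => by simp [K, H1]
  refine ⟨fun q => L (1, q), by fun_prop, fun q => ?_⟩
  simpa [K, H0] using congr_fun (hp.liftHomotopy_lifts K _ _) (1, q)

theorem catLS_le_of_subset_iUnion {A : Set Y} {m : ℕ} (C : Fin m → Set Y)
    (hcl : ∀ i, IsClosed (C i)) (hc : ∀ i, ContractibleIn (C i)) (hA : A ⊆ ⋃ i, C i) :
    catLS A ≤ m :=
  sInf_le ⟨m, rfl, C, hcl, hc, hA⟩

end ContractibleIn

section InfDist

variable {E : Type*} [SeminormedAddCommGroup E]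

theorem infDist_neg_neg (x : E) (s : Set E) : infDist (-x) (-s) = infDist x s := by
  rw [← image_neg_eq_neg, infDist_image isometry_neg]

theorem infDist_pos_of_mem_neg {s : Set E} (hs : IsClosed s) (hd : Disjoint s (-s)) {x : E}
    (hx : x ∈ -s) : 0 < infDist x s :=
  (hs.notMem_iff_infDist_pos ⟨-x, hx⟩).mp (hd.notMem_of_mem_right hx)

end InfDist

section Genus

variable {E : Type*} [NormedAddCommGroup E]

theorem genus_le_of_hasOddMap {A : Set E} {m : ℕ} (h : HasOddMap A m) : genus A ≤ m := by
  rw [genus]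
  split_ifs
  · exact zero_le
  · exact sInf_le ⟨m, rfl, h⟩

theorem hasOddMap_of_subset_iUnion {A : Set E} {m : ℕ} (P : Fin m → Set E)
    (hcl : ∀ i, IsClosed (P i)) (hd : ∀ i, Disjoint (P i) (-P i))
    (hA : A ⊆ ⋃ i, (P i ∪ -P i)) : HasOddMap A m := by
  refine ⟨fun a i => infDist (a : E) (-P i) - infDist (a : E) (P i), by fun_prop, fun a h0 => ?_,
    fun a _ => funext fun i => ?_⟩
  · obtain ⟨i, hi | hi⟩ := mem_iUnion.mp (hA a.2)
    · have := infDist_pos_of_mem_neg (hcl i).neg (by simpa [disjoint_comm] using hd i)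
        (by simpa using hi)
      have := congr_fun h0 i
      simp_all [infDist_zero_of_mem hi]
    · have := infDist_pos_of_mem_neg (hcl i) (hd i) hi
      have := congr_fun h0 i
      simp_all [infDist_zero_of_mem hi]
  · simp only [Pi.neg_apply, neg_sub]
    rw [infDist_neg_neg, ← infDist_neg_neg (a : E) (-P i), neg_neg]

theorem exists_subset_iUnion_of_hasOddMap {A : Set E} (hcl : IsClosed A) (hsymm : A = -A)
    {m : ℕ} (h : HasOddMap A m) :
    ∃ P : Fin m → Set E, (∀ i, IsClosed (P i)) ∧ (∀ i, Disjoint (P i) (-P i)) ∧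
      A ⊆ ⋃ i, (P i ∪ -P i) := by
  obtain ⟨h, hc, h0, hodd⟩ := h
  have hneg {a : E} (ha : a ∈ A) : -a ∈ A := by rw [hsymm] at ha; simpa using ha
  refine ⟨fun i => Subtype.val '' {a : A | ‖h a‖ ≤ h a i},
    fun i => hcl.isClosedMap_subtype_val _ (isClosed_le (by fun_prop) (by fun_prop)),
    fun i => ?_, fun a ha => ?_⟩
  · refine Set.disjoint_left.mpr ?_
    rintro _ ⟨a, ha, rfl⟩ ⟨b, hb, hba⟩
    have : b = ⟨-a, hneg a.2⟩ := Subtype.ext hba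
    subst this
    simp only [mem_ofPred_eq, hodd, Pi.neg_apply, norm_neg] at ha hb
    exact h0 a (norm_eq_zero.mp (by linarith [norm_nonneg (h a)]))
  · obtain ⟨i, hi⟩ : ∃ i, ‖h ⟨a, ha⟩‖ ≤ |h ⟨a, ha⟩ i| := by
      by_contra! hlt
      exact lt_irrefl _ ((pi_norm_lt_iff (norm_pos_iff.mpr (h0 _))).mpr hlt)
    refine mem_iUnion.mpr ⟨i, ?_⟩
    rcases le_or_gt 0 (h ⟨a, ha⟩ i) with hpos | hnegi
    · exact Or.inl ⟨⟨a, ha⟩, by simpa [abs_of_nonneg hpos] using hi, rfl⟩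
    · refine Or.inr ⟨⟨-a, hneg ha⟩, ?_, rfl⟩
      simpa [hodd ⟨a, ha⟩ (hneg ha), abs_of_neg hnegi] using hi

end Genus

theorem dist_neg_of_norm_eq_one {v : B} (hv : ‖v‖ = 1) : dist v (-v) = 2 := by
  rw [dist_eq_norm, sub_neg_eq_add, ← two_smul ℝ, norm_smul, hv]
  norm_num

theorem sub_smul_add_smul_ne_zero {y z : B} (hy : ‖y‖ = 1) (hz : ‖z‖ = 1) (hyz : y ≠ -z)
    {t : ℝ} (ht : t ∈ I) : (1 - t) • y + t • z ≠ 0 := by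
  intro h0
  have hnorm : |1 - t| = |t| := by
    simpa [norm_smul, hy, hz] using congrArg norm (eq_neg_of_add_eq_zero_left h0)
  obtain rfl : t = 1 / 2 := by
    rw [abs_of_nonneg (by linarith [ht.2]), abs_of_nonneg ht.1] at hnorm
    linarith
  norm_num [← smul_add] at h0
  exact hyz (eq_neg_of_add_eq_zero_left h0)

theorem contractibleIn_sphere_of_neg_notMem {S : Set (sphere (0 : B) 1)} {z : sphere (0 : B) 1}
    (hz : -z ∉ S) : ContractibleIn S := by
  let v (p : S × I) : B := (1 - (p.2 : ℝ)) • (p.1 : B) + (p.2 : ℝ) • (z : B)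
  have hv (p : S × I) : v p ≠ 0 := by
    refine sub_smul_add_smul_ne_zero (norm_eq_of_mem_sphere p.1.1) (norm_eq_of_mem_sphere z)
      (fun h => hz ?_) p.2.2
    convert p.1.2
    exact Subtype.ext h.symm
  have hvc : Continuous v := by fun_prop
  refine ⟨z, ⟨fun p => ⟨‖v p‖⁻¹ • v p, mem_sphere_zero_iff_norm.mpr (norm_smul_inv_norm (hv p))⟩,
    ((hvc.norm.inv₀ fun p => norm_ne_zero_iff.mpr (hv p)).smul hvc).subtype_mk _⟩,
    fun x => ?_, fun x => ?_⟩ <;> ext <;> simp [v, norm_eq_of_mem_sphere]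

theorem Real.unitSphere_eq_one_or_eq_neg_one (g : sphere (0 : ℝ) 1) : g = 1 ∨ g = -1 := by
  have hg : |(g : ℝ)| = 1 := by rw [← Real.norm_eq_abs, norm_eq_of_mem_sphere]
  rcases (abs_eq zero_le_one).mp hg with h | h
  · exact Or.inl (Subtype.ext h)
  · exact Or.inr (Subtype.ext h)

theorem neg_one_smul_sphere (x : sphere (0 : B) 1) : (-1 : sphere (0 : ℝ) 1) • x = -x :=
  Subtype.ext (show ((-1 : sphere (0 : ℝ) 1) : ℝ) • (x : B) = -(x : B) by simp)

namespace Proj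

def mk : sphere (0 : B) 1 → Proj B := Quotient.mk (projSetoid B)

theorem mk_surjective : Function.Surjective (mk : sphere (0 : B) 1 → Proj B) :=
  Quotient.mk_surjective

@[fun_prop]
theorem continuous_mk : Continuous (mk : sphere (0 : B) 1 → Proj B) :=
  continuous_quotient_mk'

theorem mk_eq_mk_iff {x y : sphere (0 : B) 1} : mk x = mk y ↔ x = y ∨ x = -y :=
  Quotient.eq.trans (or_congr Subtype.ext_iff.symm (by rw [Subtype.ext_iff, coe_neg_sphere]))

@[simp]
theorem mk_neg (x : sphere (0 : B) 1) : mk (-x) = mk x :=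
  mk_eq_mk_iff.mpr (Or.inr rfl)

theorem isQuotientMap_mk : IsQuotientMap (mk : sphere (0 : B) 1 → Proj B) :=
  isQuotientMap_quotient_mk'

theorem isQuotientCoveringMap_mk :
    IsQuotientCoveringMap (mk : sphere (0 : B) 1 → Proj B) (sphere (0 : ℝ) 1) where
  toIsQuotientMap := isQuotientMap_mk
  apply_eq_iff_mem_orbit {x y} := by
    rw [mk_eq_mk_iff]
    constructor
    · rintro (rfl | rfl)
      · exact ⟨1, one_smul _ _⟩
      · exact ⟨-1, neg_one_smul_sphere y⟩
    · rintro ⟨g, rfl⟩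
      rcases Real.unitSphere_eq_one_or_eq_neg_one g with rfl | rfl
      · exact Or.inl (one_smul _ _)
      · exact Or.inr (neg_one_smul_sphere y)
  disjoint x := by
    refine ⟨ball x 1, ball_mem_nhds x one_pos, fun g ⟨_, ⟨u, hu, rfl⟩, hgu⟩ => ?_⟩
    refine (Real.unitSphere_eq_one_or_eq_neg_one g).resolve_right fun hg => ?_
    subst hg
    have hu' : dist (u : B) x < 1 := hu
    have hgu' : dist (-(u : B)) x < 1 := by
      simpa only [mem_ball, neg_one_smul_sphere, Subtype.dist_eq, coe_neg_sphere] using hgu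
    linarith [dist_triangle_right (u : B) (-(u : B)) x,
      dist_neg_of_norm_eq_one (norm_eq_of_mem_sphere u)]

theorem isCoveringMap_mk : IsCoveringMap (mk : sphere (0 : B) 1 → Proj B) :=
  isQuotientCoveringMap_mk.isCoveringMap

theorem mk_preimage_image (S : Set (sphere (0 : B) 1)) : mk ⁻¹' (mk '' S) = S ∪ -S := by
  ext x
  simp only [mem_preimage, mem_image, mem_union, mem_neg, mk_eq_mk_iff]
  constructor
  · rintro ⟨y, hy, rfl | rfl⟩
    · exact Or.inl hy
    · exact Or.inr hy
  · rintro (hx | hx)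
    · exact ⟨x, hx, Or.inl rfl⟩
    · exact ⟨-x, hx, Or.inr rfl⟩

theorem isClosedMap_mk : IsClosedMap (mk : sphere (0 : B) 1 → Proj B) := fun S hS => by
  rw [← isQuotientMap_mk.isClosed_preimage]
  exact (mk_preimage_image S).symm ▸ hS.union hS.neg

theorem exists_isClosed_disjoint_neg_of_contractibleIn {C : Set (Proj B)} (hcl : IsClosed C)
    (hc : ContractibleIn C) :
    ∃ P : Set B, IsClosed P ∧ Disjoint P (-P) ∧
      ∀ x : sphere (0 : B) 1, mk x ∈ C → (x : B) ∈ P ∪ -P := by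
  obtain ⟨ℓ, hℓc, hℓ⟩ := isCoveringMap_mk.exists_section_of_contractibleIn mk_surjective hc
  let ℓ' (q : C) : mk ⁻¹' C := ⟨ℓ q, by rw [mem_preimage, hℓ]; exact q.2⟩
  have hℓ' : IsClosedEmbedding ℓ' :=
    Function.LeftInverse.isClosedEmbedding (f := fun x => ⟨mk x, x.2⟩)
      (fun q => Subtype.ext (hℓ q)) (by fun_prop) (by fun_prop)
  have hP : IsClosedEmbedding fun q => ((ℓ q : sphere (0 : B) 1) : B) :=
    isClosed_sphere.isClosedEmbedding_subtypeVal.comp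
      ((hcl.preimage continuous_mk).isClosedEmbedding_subtypeVal.comp hℓ')
  refine ⟨range fun q => (ℓ q : B), hP.isClosed_range, Set.disjoint_left.mpr ?_, fun x hx => ?_⟩
  · rintro _ ⟨q, rfl⟩ ⟨q', hq'⟩
    obtain rfl : q' = q := Subtype.ext <| by
      rw [← hℓ q', ← hℓ q, ← mk_neg (ℓ q)]
      exact congrArg mk (Subtype.ext hq')
    have := dist_neg_of_norm_eq_one (norm_eq_of_mem_sphere (ℓ q'))
    rw [← hq', dist_self] at this
    norm_num at this
  · rcases mk_eq_mk_iff.mp (hℓ ⟨mk x, hx⟩) with h | h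
    · exact Or.inl ⟨_, congrArg Subtype.val h⟩
    · exact Or.inr ⟨⟨mk x, hx⟩, congrArg Subtype.val h⟩

theorem contractibleIn_image_mk [Nontrivial B] {S : Set (sphere (0 : B) 1)} (hS : IsClosed S)
    (hd : Disjoint S (-S)) : ContractibleIn (mk '' S) := by
  obtain ⟨z, hz⟩ : ∃ z : sphere (0 : B) 1, -z ∉ S := by
    rcases S.eq_empty_or_nonempty with rfl | ⟨z, hz⟩
    · obtain ⟨z, hz⟩ := (NormedSpace.sphere_nonempty (E := B) (x := 0)).mpr zero_le_one
      exact ⟨⟨z, hz⟩, notMem_empty _⟩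
    · exact ⟨z, fun h => hd.notMem_of_mem_left hz (by rwa [mem_neg])⟩
  refine (contractibleIn_sphere_of_neg_notMem hz).image continuous_mk
    (IsClosedEmbedding.of_continuous_injective_isClosedMap (by fun_prop) ?_
      (isClosedMap_mk.comp hS.isClosedMap_subtype_val)).isEmbedding
  intro x y hxy
  refine Subtype.ext ((mk_eq_mk_iff.mp hxy).resolve_right fun h => ?_)
  exact hd.notMem_of_mem_left x.2 (by rw [mem_neg, h, neg_neg]; exact y.2)

theorem genus_eq_catLS_image_mk [Nontrivial B] {A : Set B} (hA : A ⊆ sphere 0 1)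
    (hcl : IsClosed A) (hsymm : A = -A) : genus A = catLS (mk '' (Subtype.val ⁻¹' A)) := by
  apply le_antisymm
  · refine le_sInf ?_
    rintro _ ⟨m, rfl, C, hCcl, hCc, hcov⟩
    choose P hPcl hPd hP using
      fun i => exists_isClosed_disjoint_neg_of_contractibleIn (hCcl i) (hCc i)
    refine genus_le_of_hasOddMap (hasOddMap_of_subset_iUnion P hPcl hPd fun a ha => ?_)
    obtain ⟨i, hi⟩ := mem_iUnion.mp (hcov ⟨⟨a, hA ha⟩, ha, rfl⟩)
    exact mem_iUnion.mpr ⟨i, hP i ⟨a, hA ha⟩ hi⟩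
  · rw [genus]
    split_ifs with hA0
    · subst hA0
      exact catLS_le_of_subset_iUnion (m := 0) (fun i => i.elim0) (fun i => i.elim0)
        (fun i => i.elim0) (by simp)
    refine le_sInf ?_
    rintro _ ⟨m, rfl, h⟩
    obtain ⟨P, hPcl, hPd, hAP⟩ := exists_subset_iUnion_of_hasOddMap hcl hsymm h
    have hPcl' (i : Fin m) : IsClosed (Subtype.val ⁻¹' P i : Set (sphere (0 : B) 1)) :=
      (hPcl i).preimage continuous_subtype_val
    refine catLS_le_of_subset_iUnion _ (fun i => isClosedMap_mk _ (hPcl' i))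
      (fun i => contractibleIn_image_mk (hPcl' i) ((hPd i).preimage Subtype.val)) ?_
    rintro _ ⟨x, hx, rfl⟩
    obtain ⟨i, hi | hi⟩ := mem_iUnion.mp (hAP hx)
    · exact mem_iUnion.mpr ⟨i, x, hi, rfl⟩
    · exact mem_iUnion.mpr ⟨i, -x, hi, mk_neg x⟩

theorem neg_image_val_preimage_mk (A' : Set (Proj B)) :
    -(Subtype.val '' (mk ⁻¹' A')) = Subtype.val '' (mk ⁻¹' A') := by
  ext x
  constructor
  · rintro ⟨y, hy, hyx⟩
    exact ⟨-y, by simpa using hy, by simp [hyx]⟩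
  · rintro ⟨y, hy, rfl⟩
    exact ⟨-y, by simpa using hy, rfl⟩

theorem setOf_le_catLS_eq_image [Nontrivial B] (k : ℕ∞) :
    {A' : Set (Proj B) | IsClosed A' ∧ k ≤ catLS A'} =
      (fun A => mk '' (Subtype.val ⁻¹' A)) ''
        {A : Set B | A ⊆ sphere 0 1 ∧ IsClosed A ∧ A = -A ∧ k ≤ genus A} := by
  ext A'
  constructor
  · rintro ⟨hA'cl, hA'k⟩
    have hA : Subtype.val '' (mk ⁻¹' A') ⊆ sphere (0 : B) 1 := by simp
    have hcl : IsClosed (Subtype.val '' (mk ⁻¹' A')) :=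
      isClosed_sphere.isClosedMap_subtype_val _ (hA'cl.preimage continuous_mk)
    have hsymm := (neg_image_val_preimage_mk A').symm
    have hproj : mk '' (Subtype.val ⁻¹' (Subtype.val '' (mk ⁻¹' A'))) = A' := by
      rw [preimage_image_eq _ Subtype.val_injective, image_preimage_eq _ mk_surjective]
    refine ⟨_, ⟨hA, hcl, hsymm, ?_⟩, hproj⟩
    rwa [genus_eq_catLS_image_mk hA hcl hsymm, hproj]
  · rintro ⟨A, ⟨hA, hcl, hsymm, hk⟩, rfl⟩
    exact ⟨isClosedMap_mk _ (hcl.preimage continuous_subtype_val),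
      genus_eq_catLS_image_mk hA hcl hsymm ▸ hk⟩

theorem iSup_image_mk {α : Type*} [CompleteLattice α] {f : Proj B → α} {F : B → α}
    (hF : ∀ x (hx : x ∈ sphere (0 : B) 1), F x = f (mk ⟨x, hx⟩)) {A : Set B}
    (hA : A ⊆ sphere 0 1) : ⨆ x ∈ A, F x = ⨆ q ∈ mk '' (Subtype.val ⁻¹' A), f q := by
  conv_lhs => rw [← image_preimage_eq_of_subset (f := Subtype.val) (s := A)
    (hA.trans Subtype.range_coe.superset)]
  simp only [iSup_image]
  exact iSup_congr fun x => iSup_congr fun _ => hF x x.2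

end Proj

theorem kr_eq_hs [Nontrivial B] (f : Proj B → ℝ) (F : B → ℝ)
    (hF : ∀ x (hx : x ∈ sphere (0 : B) 1), F x = f (Proj.mk ⟨x, hx⟩)) (k : ℕ) :
    kr F k = hs f k := by
  rw [kr, hs, Proj.setOf_le_catLS_eq_image, iInf_image]
  exact iInf_congr fun A => iInf_congr fun hA =>
    Proj.iSup_image_mk (f := fun q => (f q : EReal)) (fun x hx => by rw [hF x hx]) hA.1

theorem kr_eq_hs_rpn_general (n : ℕ)
    (f : Proj (EuclideanSpace ℝ (Fin (n + 1))) → ℝ)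
    (F : EuclideanSpace ℝ (Fin (n + 1)) → ℝ)
    (hF : ∀ x (hx : x ∈ sphere (0 : EuclideanSpace ℝ (Fin (n + 1))) 1),
      F x = f (Quotient.mk (projSetoid (EuclideanSpace ℝ (Fin (n + 1)))) ⟨x, hx⟩)) :
    ∀ k : ℕ, 1 ≤ k → k ≤ n + 1 → kr F k = hs f k :=
  fun k _ _ => kr_eq_hs f F hF k

/-- For a continuous function on `ℝP^n` the Krasnoselskii eigenvalues of the induced even
function on `S^n` coincide with the category eigenvalues, for all `k ∈ {1, …, n+1}`. -/
theorem kr_eq_hs_rpn (n : ℕ)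
    (f : Proj (EuclideanSpace ℝ (Fin (n + 1))) → ℝ) (hf : Continuous f)
    (F : EuclideanSpace ℝ (Fin (n + 1)) → ℝ)
    (hF : ∀ x (hx : x ∈ sphere (0 : EuclideanSpace ℝ (Fin (n + 1))) 1),
      F x = f (Quotient.mk (projSetoid (EuclideanSpace ℝ (Fin (n + 1)))) ⟨x, hx⟩)) :
    ∀ k : ℕ, 1 ≤ k → k ≤ n + 1 → kr F k = hs f k :=
  kr_eq_hs_rpn_general n f F hF
end
end
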